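/- Let n ∈ ℤ^d_{>0} be a velocity vector. Then the minimum of ca(Z(n), w) over all interior lattice points w ∈ int(Z(n)) ∩ ℤ^d equals 1/gap(n) − 1, where gap(n) := max_{β ∈ ℝ} min_{1≤i≤d} ‖β n_i‖_ℤ. -/

import Mathlib

open Pointwise

/-- The coefficient of asymmetry of a point `w` in a convex set `K`:
`ca(K,w) = min{λ ≥ 1 : w − K ⊆ λ(K − w)}`. -/
noncomputable def ca {E : Type*} [AddCommGroup E] [Module ℝ E] (K : Set E) (w : E) : ℝ :=
  sInf {l : ℝ | 1 ≤ l ∧ ({w} : Set E) - K ⊆ l • (K - {w})}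

/-- A point of `ℝ^d` all of whose coordinates are integers. -/
def IsLatticePoint {d : ℕ} (x : Fin d → ℝ) : Prop := ∀ i, ∃ z : ℤ, x i = (z : ℝ)

/-- The distance from a real number to the nearest integer. -/
noncomputable def distToInt (x : ℝ) : ℝ := |x - round x|

/-!
Writing `v = n`, a point `x` lies on some translate `t • v + [0,1]^d` exactly when the intervals
`{t | x i - t * v i ∈ [0, 1]}` pairwise meet, so `Z(n)` is the polytope cut out by the facet
inequalities `0 ≤ slack v i k x`. Against such a description, `w - Z ⊆ λ • (Z - w)` can be checked
facet by facet, which gives `ca(Z, w) = 1 / δ(w) - 1` for the depth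
`δ(w) = min_{i,k} slack v i k w / (v i + v k)` of `w` in `Z`. The same interval argument, run on
the shrunken box `[δ, 1 - δ]^d`, shows that a lattice point `w` has `δ(w) ≤ min_i ‖β v_i‖` for some
`β`, so `δ(w) ≤ gap(n)`; conversely, for a `β` attaining the gap, the lattice point `⌈β v⌉` has
depth at least `gap(n)`.
-/

theorem exists_forall_mem_Icc_iff {ι α : Type*} [Finite ι] [Nonempty ι]
    [ConditionallyCompleteLattice α] {a b : ι → α} :
    (∃ t, ∀ i, t ∈ Set.Icc (a i) (b i)) ↔ ∀ i j, a i ≤ b j :=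
  ⟨fun ⟨_, ht⟩ i j => (ht i).1.trans (ht j).2,
    fun h => ⟨⨆ i, a i, fun j => ⟨le_ciSup (Finite.bddAbove_range a) j, ciSup_le (h · j)⟩⟩⟩

theorem distToInt_eq_norm (x : ℝ) : distToInt x = ‖(x : UnitAddCircle)‖ :=
  UnitAddCircle.norm_eq.symm

theorem le_distToInt_iff {m x : ℝ} : m ≤ distToInt x ↔ ∀ z : ℤ, m ≤ |x - z| :=
  ⟨fun h z => h.trans (round_le x z), fun h => h (round x)⟩

theorem le_distToInt_of_mem_Icc {m x : ℝ} {z : ℤ} (h : z - x ∈ Set.Icc m (1 - m)) :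
    m ≤ distToInt x := by
  refine le_distToInt_iff.2 fun y => ?_
  rcases le_or_gt z y with hzy | hyz
  · have : (z : ℝ) ≤ y := by exact_mod_cast hzy
    calc m ≤ z - x := h.1
      _ ≤ y - x := by linarith
      _ ≤ |x - y| := by rw [abs_sub_comm]; exact le_abs_self _
  · have : (y : ℝ) + 1 ≤ z := by exact_mod_cast Int.add_one_le_of_lt hyz
    calc m ≤ x - y := by linarith [h.2]
      _ ≤ |x - y| := le_abs_self _

theorem ceil_sub_mem_Icc_of_le_distToInt {m x : ℝ} (h : m ≤ distToInt x) :
    ⌈x⌉ - x ∈ Set.Icc m (1 - m) := by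
  rw [le_distToInt_iff] at h
  have h1 := h ⌈x⌉
  have h2 := h (⌈x⌉ - 1)
  have := Int.le_ceil x
  have := Int.ceil_lt_add_one x
  push_cast at h2
  rw [abs_of_nonpos (by linarith)] at h1
  rw [abs_of_nonneg (by linarith)] at h2
  constructor <;> linarith

theorem Irrational.distToInt_pos {x : ℝ} (hx : Irrational x) : 0 < distToInt x :=
  abs_pos.2 (sub_ne_zero.2 (hx.ne_int _))

theorem exists_forall_iInf_distToInt_le {ι : Type*} [Finite ι] (n : ι → ℤ) :
    ∃ β : ℝ, ∀ β' : ℝ, ⨅ i, distToInt (β' * n i) ≤ ⨅ i, distToInt (β * n i) := by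
  set g : UnitAddCircle → ℝ := fun θ => ⨅ i, ‖n i • θ‖
  have hg (β : ℝ) : ⨅ i, distToInt (β * n i) = g β := by
    simp only [g, distToInt_eq_norm, mul_comm β, ← zsmul_eq_mul, AddCircle.coe_zsmul]
  have hg_usc : UpperSemicontinuous g :=
    upperSemicontinuous_ciInf (fun _ => (Set.finite_range _).bddBelow)
      fun i => (continuous_norm.comp (continuous_zsmul (n i))).upperSemicontinuous
  obtain ⟨θ, -, hθ⟩ :=
    (hg_usc.upperSemicontinuousOn _).exists_isMaxOn Set.univ_nonempty isCompact_univ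
  obtain ⟨β, rfl⟩ := QuotientAddGroup.mk_surjective θ
  exact ⟨β, fun β' => by rw [hg, hg]; exact hθ (Set.mem_univ _)⟩

theorem iInf_distToInt_sqrt_two_mul_pos {ι : Type*} [Finite ι] [Nonempty ι] {n : ι → ℤ}
    (hn : ∀ i, n i ≠ 0) : 0 < ⨅ i, distToInt (√2 * n i) := by
  obtain ⟨i, hi⟩ := exists_eq_ciInf_of_finite (f := fun i => distToInt (√2 * n i))
  rw [← hi, mul_comm]
  exact (irrational_sqrt_two.intCast_mul (hn i)).distToInt_pos

namespace LonelyRunner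

open Filter Topology

variable {ι : Type*}

def zonotope (v : ι → ℝ) : Set (ι → ℝ) := Set.range (fun t : ℝ => t • v) + Set.Icc 0 1

def slack (v : ι → ℝ) (i k : ι) (x : ι → ℝ) : ℝ := v i * x k - v k * (x i - 1)

noncomputable def depth (v x : ι → ℝ) : ℝ := ⨅ p : ι × ι, slack v p.1 p.2 x / (v p.1 + v p.2)

theorem mem_zonotope_iff_exists {v x : ι → ℝ} :
    x ∈ zonotope v ↔ ∃ t : ℝ, ∀ i, x i - t * v i ∈ Set.Icc 0 1 := by
  constructor
  · rintro ⟨_, ⟨t, rfl⟩, y, hy, rfl⟩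
    exact ⟨t, fun i => by simpa using And.intro (hy.1 i) (hy.2 i)⟩
  · rintro ⟨t, ht⟩
    exact ⟨t • v, ⟨t, rfl⟩, x - t • v, ⟨fun i => by simpa using (ht i).1,
      fun i => by simpa using (ht i).2⟩, add_sub_cancel _ _⟩

theorem slack_self (v x : ι → ℝ) (i : ι) : slack v i i x = v i := by
  unfold slack; ring

theorem slack_add_smul_sub (v w x : ι → ℝ) (i k : ι) (c : ℝ) :
    slack v i k (w + c • (w - x)) =
      (1 + c) * slack v i k w + c * slack v k i x - c * (v i + v k) := by
  simp only [slack, Pi.add_apply, Pi.smul_apply, Pi.sub_apply, smul_eq_mul]; ring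

theorem single_mem_zonotope {v : ι → ℝ} [DecidableEq ι] (k : ι) : Pi.single k 1 ∈ zonotope v :=
  mem_zonotope_iff_exists.2 ⟨0, fun i => by
    rcases eq_or_ne i k with rfl | hik <;> simp [*]⟩

variable [Finite ι] [Nonempty ι] {v : ι → ℝ} (hv : ∀ i, 0 < v i)
include hv

theorem exists_forall_sub_mul_mem_Icc_iff (x : ι → ℝ) (m : ℝ) :
    (∃ t : ℝ, ∀ i, x i - t * v i ∈ Set.Icc m (1 - m)) ↔
      ∀ i k, m * (v i + v k) ≤ slack v i k x := by
  have hIcc (t : ℝ) (i : ι) : x i - t * v i ∈ Set.Icc m (1 - m) ↔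
      t ∈ Set.Icc ((x i - 1 + m) / v i) ((x i - m) / v i) := by
    rw [Set.mem_Icc, Set.mem_Icc, div_le_iff₀ (hv i), le_div_iff₀ (hv i)]
    constructor <;> rintro ⟨h1, h2⟩ <;> constructor <;> linarith
  simp only [hIcc, exists_forall_mem_Icc_iff, div_le_div_iff₀ (hv _) (hv _), slack]
  refine forall_congr' fun i => forall_congr' fun k => ?_
  constructor <;> intro h <;> linarith

theorem mem_zonotope_iff {x : ι → ℝ} : x ∈ zonotope v ↔ ∀ i k, 0 ≤ slack v i k x := by
  rw [mem_zonotope_iff_exists]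
  simpa using exists_forall_sub_mul_mem_Icc_iff hv x 0

theorem interior_zonotope : interior (zonotope v) = {x | ∀ i k, 0 < slack v i k x} := by
  classical
  refine subset_antisymm (fun x hx i k => ?_) (interior_maximal
    (fun x hx => (mem_zonotope_iff hv).2 fun i k => (hx i k).le) ?_)
  · rcases eq_or_ne i k with rfl | hik
    · rw [slack_self]; exact hv i
    have hnear : ∀ᶠ ε in 𝓝 (0 : ℝ), x + ε • Pi.single i 1 ∈ zonotope v := by
      refine ContinuousAt.eventually_mem (by fun_prop) ?_
      simpa using mem_interior_iff_mem_nhds.1 hx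
    obtain ⟨ε, hε, hεZ⟩ :=
      (eventually_mem_nhdsWithin.and (nhdsWithin_le_nhds hnear)).exists (f := 𝓝[>] 0)
    have := (mem_zonotope_iff hv).1 hεZ i k
    simp only [slack, Pi.add_apply, Pi.smul_apply, Pi.single_eq_same, Pi.single_eq_of_ne' hik,
      smul_eq_mul, mul_zero, add_zero, mul_one] at this ⊢
    nlinarith [mul_pos (hv k) (Set.mem_Ioi.1 hε)]
  · simp only [Set.ofPred_forall]
    exact isOpen_iInter_of_finite fun i => isOpen_iInter_of_finite fun k =>
      isOpen_lt continuous_const (by unfold slack; fun_prop)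

theorem le_depth_iff {x : ι → ℝ} {m : ℝ} :
    m ≤ depth v x ↔ ∀ i k, m * (v i + v k) ≤ slack v i k x := by
  rw [depth, le_ciInf_iff (Finite.bddBelow_range _), Prod.forall]
  simp only [le_div_iff₀ (add_pos (hv _) (hv _))]

theorem depth_pos_iff {x : ι → ℝ} : 0 < depth v x ↔ ∀ i k, 0 < slack v i k x := by
  obtain ⟨p, hp⟩ :=
    exists_eq_ciInf_of_finite (f := fun p : ι × ι => slack v p.1 p.2 x / (v p.1 + v p.2))
  refine ⟨fun h i k => ?_, fun h => ?_⟩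
  · have := h.trans_le (ciInf_le (Finite.bddBelow_range _) (i, k))
    exact (div_pos_iff_of_pos_right (add_pos (hv i) (hv k))).1 this
  · rw [depth, ← hp]
    exact div_pos (h _ _) (add_pos (hv _) (hv _))

theorem mem_interior_zonotope_iff {x : ι → ℝ} : x ∈ interior (zonotope v) ↔ 0 < depth v x := by
  rw [interior_zonotope hv, depth_pos_iff hv, Set.mem_ofPred_eq]

theorem depth_le_half (x : ι → ℝ) : depth v x ≤ 1 / 2 := by
  obtain ⟨i⟩ := ‹Nonempty ι›
  refine (ciInf_le (Finite.bddBelow_range _) (i, i)).trans_eq ?_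
  rw [slack_self, div_eq_iff (add_pos (hv i) (hv i)).ne']
  ring

theorem singleton_sub_subset_smul_iff (w : ι → ℝ) {l : ℝ} (hl : 1 ≤ l) :
    {w} - zonotope v ⊆ l • (zonotope v - {w}) ↔
      ∀ i k, v i + v k ≤ (1 + l) * slack v i k w := by
  classical
  have hl0 : 0 < l := by linarith
  have hmem (x : ι → ℝ) : w - x ∈ l • (zonotope v - {w}) ↔ w + l⁻¹ • (w - x) ∈ zonotope v := by
    rw [Set.mem_smul_set_iff_inv_smul_mem₀ hl0.ne', Set.sub_singleton]
    simp only [Set.mem_image, sub_eq_iff_eq_add', exists_eq_right]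
  have hscale (s t V : ℝ) :
      (1 + l⁻¹) * s + l⁻¹ * t - l⁻¹ * V = l⁻¹ * ((1 + l) * s + t - V) := by
    field_simp; ring
  rw [Set.singleton_sub, Set.image_subset_iff]
  simp_rw [Set.subset_def, Set.mem_preimage, hmem, mem_zonotope_iff hv, slack_add_smul_sub, hscale,
    mul_nonneg_iff_of_pos_left (inv_pos.2 hl0)]
  refine ⟨fun h i k => ?_, fun h x hx i k => by linarith [h i k, hx k i]⟩
  rcases eq_or_ne i k with rfl | hik
  · rw [slack_self]; nlinarith [hv i]
  -- `Pi.single k 1 ∈ Z` makes the opposite facet `slack v k i` tight.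
  · have := h _ ((mem_zonotope_iff hv).1 (single_mem_zonotope k)) i k
    simp only [slack, Pi.single_eq_same, Pi.single_eq_of_ne hik] at this ⊢
    linarith

theorem ca_zonotope_eq {w : ι → ℝ} (hw : 0 < depth v w) :
    ca (zonotope v) w = 1 / depth v w - 1 := by
  have hfeas (l : ℝ) (hl : 1 ≤ l) :
      {w} - zonotope v ⊆ l • (zonotope v - {w}) ↔ 1 / depth v w - 1 ≤ l := by
    rw [singleton_sub_subset_smul_iff hv w hl, sub_le_iff_le_add', one_div_le hw (by linarith),
      le_depth_iff hv]
    simp_rw [one_div_mul_eq_div, div_le_iff₀' (by linarith : (0 : ℝ) < 1 + l)]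
  have h2 : 2 ≤ 1 / depth v w := by
    rw [le_div_iff₀ hw]; linarith [depth_le_half hv w]
  have hset : {l : ℝ | 1 ≤ l ∧ {w} - zonotope v ⊆ l • (zonotope v - {w})} =
      Set.Ici (1 / depth v w - 1) := by
    ext l
    exact ⟨fun ⟨hl, h⟩ => (hfeas l hl).1 h,
      fun h => ⟨by linarith [Set.mem_Ici.1 h], (hfeas l (by linarith [Set.mem_Ici.1 h])).2 h⟩⟩
  rw [ca, hset, csInf_Ici]

theorem exists_depth_intCast_le_iInf_distToInt (z : ι → ℤ) :
    ∃ β : ℝ, depth v (fun i => (z i : ℝ)) ≤ ⨅ i, distToInt (β * v i) := by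
  obtain ⟨β, hβ⟩ := (exists_forall_sub_mul_mem_Icc_iff hv _ _).2 ((le_depth_iff hv).1 le_rfl)
  exact ⟨β, le_ciInf fun i => le_distToInt_of_mem_Icc (hβ i)⟩

theorem iInf_distToInt_le_depth_ceil (β : ℝ) :
    ⨅ i, distToInt (β * v i) ≤ depth v (fun i => (⌈β * v i⌉ : ℝ)) :=
  (le_depth_iff hv).2 <| (exists_forall_sub_mul_mem_Icc_iff hv _ _).1 ⟨β, fun i =>
    ceil_sub_mem_Icc_of_le_distToInt (ciInf_le (Finite.bddBelow_range _) i)⟩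

end LonelyRunner

open LonelyRunner in
theorem ca_gap_relation_general
    {d : ℕ} (hd : 2 ≤ d) (n : Fin d → ℤ) (hpos : ∀ i, 0 < n i)
    (Z : Set (Fin d → ℝ))
    (hZ : Z = (Set.range fun t : ℝ => t • (fun i => (n i : ℝ))) + Set.Icc (0 : Fin d → ℝ) 1)
    (gap : ℝ) (hgap : gap = ⨆ β : ℝ, ⨅ i, distToInt (β * (n i : ℝ))) :
    IsLeast {r : ℝ | ∃ w : Fin d → ℝ, w ∈ interior Z ∧ IsLatticePoint w ∧ r = ca Z w}
      (1 / gap - 1) := by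
  have : Nonempty (Fin d) := ⟨⟨0, by omega⟩⟩
  have hv : ∀ i, 0 < (n i : ℝ) := fun i => Int.cast_pos.2 (hpos i)
  change Z = zonotope (fun i => (n i : ℝ)) at hZ
  subst hZ
  obtain ⟨β, hβ⟩ := exists_forall_iInf_distToInt_le n
  have hgap_eq : gap = ⨅ i, distToInt (β * n i) :=
    hgap ▸ le_antisymm (ciSup_le hβ) (le_ciSup ⟨_, Set.forall_mem_range.2 hβ⟩ β)
  have hgap_pos : 0 < gap :=
    hgap_eq ▸ (iInf_distToInt_sqrt_two_mul_pos fun i => (hpos i).ne').trans_le (hβ _)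
  have hdepth_le (z : Fin d → ℤ) : depth (fun i => (n i : ℝ)) (fun i => (z i : ℝ)) ≤ gap := by
    obtain ⟨β', hβ'⟩ := exists_depth_intCast_le_iInf_distToInt hv z
    exact hβ'.trans (hgap_eq ▸ hβ β')
  have hW : depth (fun i => (n i : ℝ)) (fun i => (⌈β * n i⌉ : ℝ)) = gap :=
    le_antisymm (hdepth_le _) (hgap_eq ▸ iInf_distToInt_le_depth_ceil hv β)
  refine ⟨⟨_, (mem_interior_zonotope_iff hv).2 (hW ▸ hgap_pos), fun i => ⟨_, rfl⟩,
    by rw [ca_zonotope_eq hv (hW ▸ hgap_pos), hW]⟩, ?_⟩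
  rintro _ ⟨w, hw, hlat, rfl⟩
  choose z hz using hlat
  obtain rfl : w = fun i => (z i : ℝ) := funext hz
  rw [ca_zonotope_eq hv ((mem_interior_zonotope_iff hv).1 hw)]
  gcongr
  exacts [(mem_interior_zonotope_iff hv).1 hw, hdepth_le z]

theorem ca_gap_relation
    {d : ℕ} (hd : 2 ≤ d) (n : Fin d → ℤ) (hpos : ∀ i, 0 < n i)
    (hdist : Function.Injective n) (hgcd : Finset.univ.gcd n = 1)
    (Z : Set (Fin d → ℝ))
    (hZ : Z = (Set.range fun t : ℝ => t • (fun i => (n i : ℝ))) + Set.Icc (0 : Fin d → ℝ) 1)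
    (gap : ℝ) (hgap : gap = ⨆ β : ℝ, ⨅ i, distToInt (β * (n i : ℝ))) :
    IsLeast {r : ℝ | ∃ w : Fin d → ℝ, w ∈ interior Z ∧ IsLatticePoint w ∧ r = ca Z w}
      (1 / gap - 1) :=
  ca_gap_relation_general hd n hpos Z hZ gap hgap
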